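/- arXiv:2007.04104 — 3 statements merged into one kernel-verified Lean document; each statement's English description precedes it below -/
import Mathlib

section
/- Let m ≥ k ≥ 1, n = k + m, and for k+1 ≤ i < j ≤ k+m let b_{i,j} : [0,1] → [0,1] be C¹ with c₁ ≤ |b_{i,j}'| ≤ c₂ on (0,1). Let M_i ∈ ℝ^{1×(m+i-1-k)} for 1 ≤ i ≤ k, and for v = (v₁,…,v_n) ∈ [L^q(0,1)]^n define |||v|||^q = Σ_{i=1}^{m} ∫₀¹ |v_i|^q + Σ_{i=1}^{k} ∫₀¹ |v_{m+i}(x) - M_i(v_{k+1}(b_{k+1,m+i}(x)),…,v_{m+i-1}(b_{m+i-1,m+i}(x)))|^q dx. Then there exists λ ≥ 1, depending only on k, m, c₁, c₂ and the M_i (but not on q), such that λ^{-1} ‖v‖_{L^q(0,1)} ≤ |||v||| ≤ λ ‖v‖_{L^q(0,1)} for all v and all q ≥ 1. -/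
/-!
Write `A_i = ∫ |v_i|^q` and `D_i = ∫ |v_{m+i} - M_i(…)|^q`. Since `|b'| ≥ c₁` and `b'` has the
Darboux property, each `b_{j,m+i}` is injective, so the change of variables `y = b_{j,m+i}(x)`
gives `∫ |v_j ∘ b_{j,m+i}|^q ≤ c₁⁻¹ A_j`. Together with the triangle inequality and
`(a_0 + ⋯ + a_n)^q ≤ (n+1)^(q-1) Σ a_l^q` this yields, with `κ` independent of `q`,
`D_i ≤ κ^q (A_{m+i} + Σ_j A_j)` and `A_{m+i} ≤ κ^q (D_i + Σ_j A_j)`, the sums running over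
`k < j < m + i`. Summing the first bound gives `|||v|||^q ≤ (1 + 2κ^q)^k ‖v‖^q`; since row `i`
only involves `v_j` with `j < m + i`, induction on `i` in the second gives
`‖v‖^q ≤ (1 + 2κ^q)^k |||v|||^q`, and `1 + 2κ^q ≤ (3κ)^q`.
-/

open MeasureTheory Set Finset
open scoped ENNReal

theorem injOn_of_hasDerivWithinAt_ne_zero {s : Set ℝ} {f f' : ℝ → ℝ} (hs : Convex ℝ s)
    (hf : ∀ x ∈ s, HasDerivWithinAt f (f' x) s x) (hf' : ∀ x ∈ s, f' x ≠ 0) : InjOn f s := by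
  have hcont : ContinuousOn f s := fun x hx => (hf x hx).continuousWithinAt
  have hint : ∀ x ∈ interior s, HasDerivWithinAt f (f' x) (interior s) x := fun x hx =>
    (hf x (interior_subset hx)).mono interior_subset
  rcases hasDerivWithinAt_forall_lt_or_forall_gt_of_forall_ne hs hf hf' with hneg | hpos
  · exact (strictAntiOn_of_hasDerivWithinAt_neg hs hcont hint
      fun x hx => hneg x (interior_subset hx)).injOn
  · exact (strictMonoOn_of_hasDerivWithinAt_pos hs hcont hint
      fun x hx => hpos x (interior_subset hx)).injOn

theorem lintegral_comp_le_of_le_abs_deriv {s t : Set ℝ} {f f' : ℝ → ℝ} {c : ℝ}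
    (hs : MeasurableSet s) (hconv : Convex ℝ s) (hf : ∀ x ∈ s, HasDerivWithinAt f (f' x) s x)
    (hc : 0 < c) (hcf : ∀ x ∈ s, c ≤ |f' x|) (hmaps : MapsTo f s t) (g : ℝ → ℝ≥0∞) :
    ∫⁻ x in s, g (f x) ≤ ENNReal.ofReal c⁻¹ * ∫⁻ y in t, g y := by
  have hinj : InjOn f s := injOn_of_hasDerivWithinAt_ne_zero hconv hf fun x hx =>
    abs_pos.1 (hc.trans_le (hcf x hx))
  calc ∫⁻ x in s, g (f x)
      ≤ ∫⁻ x in s, ENNReal.ofReal c⁻¹ * (ENNReal.ofReal |f' x| * g (f x)) := by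
        refine setLIntegral_mono_ae' hs (.of_forall fun x hx => ?_)
        rw [← mul_assoc, ← ENNReal.ofReal_mul (by positivity)]
        refine le_mul_of_one_le_left zero_le (ENNReal.one_le_ofReal.2 ?_)
        rw [inv_mul_eq_div, one_le_div hc]
        exact hcf x hx
    _ = ENNReal.ofReal c⁻¹ * ∫⁻ y in f '' s, g y := by
        rw [lintegral_const_mul' _ _ ENNReal.ofReal_ne_top,
          lintegral_image_eq_lintegral_abs_deriv_mul hs hf hinj]
    _ ≤ ENNReal.ofReal c⁻¹ * ∫⁻ y in t, g y := by
        gcongr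
        exact hmaps.image_subset

theorem setLIntegral_Ioo_comp_le_of_le_abs_derivWithin {a b c : ℝ} {f : ℝ → ℝ}
    (hf : DifferentiableOn ℝ f (Icc a b)) (hmaps : MapsTo f (Icc a b) (Icc a b)) (hc : 0 < c)
    (hder : ∀ x ∈ Ioo a b, c ≤ |derivWithin f (Icc a b) x|) (g : ℝ → ℝ≥0∞) :
    ∫⁻ x in Ioo a b, g (f x) ≤ ENNReal.ofReal c⁻¹ * ∫⁻ y in Ioo a b, g y := by
  rw [setLIntegral_congr (Ioo_ae_eq_Icc (a := a) (b := b)) (f := g)]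
  exact lintegral_comp_le_of_le_abs_deriv measurableSet_Ioo (convex_Ioo a b)
    (fun x hx => (hf x (Ioo_subset_Icc_self hx)).hasDerivWithinAt.mono Ioo_subset_Icc_self)
    hc hder (hmaps.mono_left Ioo_subset_Icc_self) g

theorem ENNReal.add_sum_rpow_le {ι : Type*} (a : ℝ≥0∞) (s : Finset ι) (f : ι → ℝ≥0∞) {q : ℝ}
    (hq : 1 ≤ q) :
    (a + ∑ j ∈ s, f j) ^ q ≤ (#s + 1 : ℝ≥0∞) ^ (q - 1) * (a ^ q + ∑ j ∈ s, f j ^ q) := by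
  simpa [Finset.sum_insertNone, Finset.card_insertNone] using
    ENNReal.rpow_sum_le_const_mul_sum_rpow (s := s.insertNone) (f := fun o => o.elim a f) hq

theorem lintegral_rpow_le_of_le_mul_add_sum {α ι : Type*} [MeasurableSpace α] {μ : Measure α}
    {s : Finset ι} {F G : α → ℝ≥0∞} {H : ι → α → ℝ≥0∞} {R : ℝ≥0∞} {q : ℝ} (hq : 1 ≤ q)
    (hG : AEMeasurable G μ) (hH : ∀ j ∈ s, AEMeasurable (H j) μ)
    (hF : ∀ᵐ x ∂μ, F x ≤ R * (G x + ∑ j ∈ s, H j x)) :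
    ∫⁻ x, F x ^ q ∂μ ≤
      R ^ q * (#s + 1 : ℝ≥0∞) ^ (q - 1) * (∫⁻ x, G x ^ q ∂μ + ∑ j ∈ s, ∫⁻ x, H j x ^ q ∂μ) := by
  have hq0 : 0 ≤ q := zero_le_one.trans hq
  have hGq : AEMeasurable (fun x => G x ^ q) μ := hG.pow_const q
  have hHq : ∀ j ∈ s, AEMeasurable (fun x => H j x ^ q) μ := fun j hj => (hH j hj).pow_const q
  calc ∫⁻ x, F x ^ q ∂μ
      ≤ ∫⁻ x, R ^ q * (#s + 1 : ℝ≥0∞) ^ (q - 1) * (G x ^ q + ∑ j ∈ s, H j x ^ q) ∂μ := by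
        refine lintegral_mono_ae (hF.mono fun x hx => ?_)
        calc F x ^ q ≤ (R * (G x + ∑ j ∈ s, H j x)) ^ q := ENNReal.rpow_le_rpow hx hq0
          _ = R ^ q * (G x + ∑ j ∈ s, H j x) ^ q := ENNReal.mul_rpow_of_nonneg _ _ hq0
          _ ≤ _ := by
            rw [mul_assoc]
            gcongr
            exact ENNReal.add_sum_rpow_le _ _ _ hq
    _ = _ := by
        have hsum : AEMeasurable (fun x => G x ^ q + ∑ j ∈ s, H j x ^ q) μ :=
          hGq.add (Finset.aemeasurable_fun_sum _ hHq)
        rw [lintegral_const_mul'' _ hsum, lintegral_add_left' hGq, lintegral_finsetSum' _ hHq]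

theorem lintegral_rpow_le_of_enorm_le_add_sum_mul {α ι : Type*} [MeasurableSpace α]
    {μ : Measure α} {s : Finset ι} {P N q : ℝ} {coef : ι → ℝ} {y w : α → ℝ} {z : ι → α → ℝ}
    (hq : 1 ≤ q) (hP₀ : 0 ≤ P) (hP : ∀ j ∈ s, |coef j| ≤ P) (hN : (#s : ℝ) ≤ N)
    (hw : AEMeasurable w μ) (hz : ∀ j ∈ s, AEMeasurable (z j) μ)
    (hy : ∀ x, ‖y x‖ₑ ≤ ‖w x‖ₑ + ‖∑ j ∈ s, coef j * z j x‖ₑ) :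
    ∫⁻ x, ‖y x‖ₑ ^ q ∂μ ≤ ENNReal.ofReal ((1 + P) * (N + 1)) ^ q *
      (∫⁻ x, ‖w x‖ₑ ^ q ∂μ + ∑ j ∈ s, ∫⁻ x, ‖z j x‖ₑ ^ q ∂μ) := by
  have hR : 1 ≤ ENNReal.ofReal (1 + P) := ENNReal.one_le_ofReal.2 (by linarith)
  have hpointwise : ∀ x, ‖y x‖ₑ ≤ ENNReal.ofReal (1 + P) * (‖w x‖ₑ + ∑ j ∈ s, ‖z j x‖ₑ) := by
    intro x
    refine (hy x).trans ?_
    rw [mul_add, Finset.mul_sum]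
    gcongr
    · exact le_mul_of_one_le_left zero_le hR
    · refine (enorm_sum_le _ _).trans (Finset.sum_le_sum fun j hj => ?_)
      rw [enorm_mul, Real.enorm_eq_ofReal_abs (coef j)]
      gcongr
      linarith [hP j hj]
  have hcard : (#s + 1 : ℝ≥0∞) ^ (q - 1) ≤ ENNReal.ofReal (N + 1) ^ q := by
    calc (#s + 1 : ℝ≥0∞) ^ (q - 1) ≤ (#s + 1 : ℝ≥0∞) ^ q :=
          ENNReal.rpow_le_rpow_of_exponent_le le_add_self (by linarith)
      _ ≤ ENNReal.ofReal (N + 1) ^ q := by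
          gcongr
          rw [← ENNReal.ofReal_natCast, ← ENNReal.ofReal_one,
            ← ENNReal.ofReal_add (by positivity) zero_le_one]
          exact ENNReal.ofReal_le_ofReal (by linarith)
  refine (lintegral_rpow_le_of_le_mul_add_sum hq hw.enorm (fun j hj => (hz j hj).enorm)
    (.of_forall hpointwise)).trans ?_
  rw [ENNReal.ofReal_mul (by linarith), ENNReal.mul_rpow_of_nonneg _ _ (by linarith)]
  gcongr

theorem sum_add_sum_le_one_add_two_mul_pow_mul (A D : ℕ → ℝ≥0∞) (K : ℝ≥0∞) (k m : ℕ)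
    (hD : ∀ i ∈ Finset.Icc 1 k,
      D i ≤ K * (A (m + i) + ∑ j ∈ Finset.Icc (k + 1) (m + i - 1), A j)) :
    ∑ i ∈ Finset.Icc 1 m, A i + ∑ i ∈ Finset.Icc 1 k, D i ≤
      (1 + 2 * K) ^ k * ∑ i ∈ Finset.Icc 1 (k + m), A i := by
  set S := ∑ i ∈ Finset.Icc 1 (k + m), A i
  have hDS : ∀ i ∈ Finset.Icc 1 k, D i ≤ 2 * K * S := by
    intro i hi
    rw [Finset.mem_Icc] at hi
    refine (hD i (Finset.mem_Icc.2 hi)).trans ?_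
    rw [mul_comm 2 K, mul_assoc, two_mul]
    gcongr
    · exact Finset.single_le_sum (fun _ _ => zero_le) (Finset.mem_Icc.2 ⟨by omega, by omega⟩)
    · exact Finset.sum_le_sum_of_subset (Finset.Icc_subset_Icc (by omega) (by omega))
  calc ∑ i ∈ Finset.Icc 1 m, A i + ∑ i ∈ Finset.Icc 1 k, D i ≤ S + k * (2 * K * S) := by
        gcongr
        · exact Finset.sum_le_sum_of_subset (Finset.Icc_subset_Icc le_rfl (by omega))
        · simpa using Finset.sum_le_card_nsmul _ _ _ hDS
    _ = (1 + k * (2 * K)) * S := by ring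
    _ ≤ (1 + 2 * K) ^ k * S := by
        gcongr
        exact one_add_mul_le_pow_of_sq_nonneg zero_le zero_le zero_le k

theorem sum_le_one_add_two_mul_pow_mul (A D : ℕ → ℝ≥0∞) (K : ℝ≥0∞) (k m : ℕ)
    (hA : ∀ i ∈ Finset.Icc 1 k,
      A (m + i) ≤ K * (D i + ∑ j ∈ Finset.Icc (k + 1) (m + i - 1), A j)) :
    ∑ i ∈ Finset.Icc 1 (k + m), A i ≤
      (1 + 2 * K) ^ k * (∑ i ∈ Finset.Icc 1 m, A i + ∑ i ∈ Finset.Icc 1 k, D i) := by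
  set T := ∑ i ∈ Finset.Icc 1 m, A i + ∑ i ∈ Finset.Icc 1 k, D i
  suffices h : ∀ i ≤ k, ∑ j ∈ Finset.Icc 1 (m + i), A j ≤ (1 + 2 * K) ^ i * T by
    simpa [add_comm k m] using h k le_rfl
  intro i
  induction i with
  | zero => simpa using le_self_add
  | succ i ih =>
    intro hi
    set X := ∑ j ∈ Finset.Icc 1 (m + i), A j
    have hX : X ≤ (1 + 2 * K) ^ i * T := ih (by omega)
    have hT : T ≤ (1 + 2 * K) ^ i * T := le_mul_of_one_le_left zero_le (one_le_pow₀ le_self_add)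
    have hnext : A (m + (i + 1)) ≤ K * (T + X) := by
      refine (hA (i + 1) (Finset.mem_Icc.2 ⟨by omega, hi⟩)).trans ?_
      gcongr
      · exact le_add_self.trans' (Finset.single_le_sum (fun _ _ => zero_le)
          (Finset.mem_Icc.2 ⟨by omega, hi⟩))
      · exact Finset.sum_le_sum_of_subset (Finset.Icc_subset_Icc (by omega) (by omega))
    calc ∑ j ∈ Finset.Icc 1 (m + (i + 1)), A j = X + A (m + (i + 1)) := by
          rw [← add_assoc, Finset.sum_Icc_succ_top (by omega)]
      _ ≤ (1 + 2 * K) ^ i * T + K * ((1 + 2 * K) ^ i * T + (1 + 2 * K) ^ i * T) := by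
          gcongr
          exact hnext.trans (by gcongr)
      _ = (1 + 2 * K) ^ (i + 1) * T := by ring
theorem ENNReal.one_add_two_mul_rpow_pow_le {κ q : ℝ} (hκ : 1 ≤ κ) (hq : 1 ≤ q) (k : ℕ) :
    (1 + 2 * ENNReal.ofReal κ ^ q) ^ k ≤ ENNReal.ofReal ((3 * κ) ^ k) ^ q := by
  have hK : 1 ≤ ENNReal.ofReal κ ^ q :=
    ENNReal.one_le_rpow (ENNReal.one_le_ofReal.2 hκ) (by linarith)
  calc (1 + 2 * ENNReal.ofReal κ ^ q) ^ k ≤ (3 ^ q * ENNReal.ofReal κ ^ q) ^ k := by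
        gcongr
        calc 1 + 2 * ENNReal.ofReal κ ^ q ≤ 3 * ENNReal.ofReal κ ^ q := by
              rw [show (3 : ℝ≥0∞) = 1 + 2 by norm_num, add_mul, one_mul]
              gcongr
          _ ≤ 3 ^ q * ENNReal.ofReal κ ^ q := by
              gcongr
              exact ENNReal.le_rpow_self_of_one_le (by norm_num) hq
    _ = ENNReal.ofReal ((3 * κ) ^ k) ^ q := by
        rw [← ENNReal.mul_rpow_of_nonneg _ _ (by linarith), ← ENNReal.rpow_mul_natCast,
          mul_comm q, ENNReal.rpow_natCast_mul, ENNReal.ofReal_pow (by linarith),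
          ENNReal.ofReal_mul (by norm_num)]
        norm_num

theorem ENNReal.toReal_bounds_of_le_ofReal_rpow_mul {S T : ℝ≥0∞} {lam q : ℝ} (hlam : 0 < lam)
    (hq : 0 ≤ q) (hS : S ≠ ⊤) (hT : T ≠ ⊤) (hTS : T ≤ ENNReal.ofReal lam ^ q * S)
    (hST : S ≤ ENNReal.ofReal lam ^ q * T) :
    lam⁻¹ ^ q * S.toReal ≤ T.toReal ∧ T.toReal ≤ lam ^ q * S.toReal := by
  have hc : 0 < lam ^ q := Real.rpow_pos_of_pos hlam q
  rw [ENNReal.ofReal_rpow_of_nonneg hlam.le hq] at hTS hST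
  have key : ∀ {X Y : ℝ≥0∞}, Y ≠ ⊤ → X ≤ ENNReal.ofReal (lam ^ q) * Y →
      X.toReal ≤ lam ^ q * Y.toReal := fun hY h => by
    simpa [ENNReal.toReal_mul, ENNReal.toReal_ofReal hc.le] using
      ENNReal.toReal_mono (ENNReal.mul_ne_top ENNReal.ofReal_ne_top hY) h
  rw [Real.inv_rpow hlam.le]
  exact ⟨(inv_mul_le_iff₀ hc).2 (key hT hST), key hS hTS⟩

theorem integral_abs_rpow_eq_toReal_lintegral {α : Type*} [MeasurableSpace α] {μ : Measure α}
    {f : α → ℝ} {q : ℝ} (hq : 0 ≤ q) (hf : AEMeasurable f μ) :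
    ∫ x, |f x| ^ q ∂μ = (∫⁻ x, ‖f x‖ₑ ^ q ∂μ).toReal := by
  rw [integral_eq_lintegral_of_nonneg_ae (.of_forall fun x => by positivity)
    (hf.abs.pow_const q).aestronglyMeasurable]
  congr 1
  exact lintegral_congr fun x => by
    rw [Real.enorm_eq_ofReal_abs, ENNReal.ofReal_rpow_of_nonneg (abs_nonneg _) hq]

theorem sum_integral_abs_rpow_bounds_of_lintegral_bounds {α : Type*} [MeasurableSpace α]
    {μ : Measure α} {k m : ℕ} {κ q : ℝ} (hκ : 1 ≤ κ) (hq : 1 ≤ q) {v W : ℕ → α → ℝ}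
    (hv : ∀ i, 1 ≤ i → i ≤ k + m → Measurable (v i) ∧ Integrable (fun x => |v i x| ^ q) μ)
    (hW : ∀ i ∈ Finset.Icc 1 k, AEMeasurable (W i) μ)
    (hWv : ∀ i ∈ Finset.Icc 1 k, ∫⁻ x, ‖W i x‖ₑ ^ q ∂μ ≤ ENNReal.ofReal κ ^ q *
      (∫⁻ x, ‖v (m + i) x‖ₑ ^ q ∂μ + ∑ j ∈ Finset.Icc (k + 1) (m + i - 1), ∫⁻ x, ‖v j x‖ₑ ^ q ∂μ))
    (hvW : ∀ i ∈ Finset.Icc 1 k, ∫⁻ x, ‖v (m + i) x‖ₑ ^ q ∂μ ≤ ENNReal.ofReal κ ^ q *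
      (∫⁻ x, ‖W i x‖ₑ ^ q ∂μ + ∑ j ∈ Finset.Icc (k + 1) (m + i - 1), ∫⁻ x, ‖v j x‖ₑ ^ q ∂μ)) :
    ((3 * κ) ^ k)⁻¹ ^ q * ∑ i ∈ Finset.Icc 1 (k + m), ∫ x, |v i x| ^ q ∂μ
        ≤ ∑ i ∈ Finset.Icc 1 m, ∫ x, |v i x| ^ q ∂μ + ∑ i ∈ Finset.Icc 1 k, ∫ x, |W i x| ^ q ∂μ
      ∧ ∑ i ∈ Finset.Icc 1 m, ∫ x, |v i x| ^ q ∂μ + ∑ i ∈ Finset.Icc 1 k, ∫ x, |W i x| ^ q ∂μ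
        ≤ ((3 * κ) ^ k) ^ q * ∑ i ∈ Finset.Icc 1 (k + m), ∫ x, |v i x| ^ q ∂μ := by
  have hq0 : 0 ≤ q := zero_le_one.trans hq
  set A : ℕ → ℝ≥0∞ := fun i => ∫⁻ x, ‖v i x‖ₑ ^ q ∂μ
  set D : ℕ → ℝ≥0∞ := fun i => ∫⁻ x, ‖W i x‖ₑ ^ q ∂μ
  have hA : ∀ i ∈ Finset.Icc 1 (k + m), ∫ x, |v i x| ^ q ∂μ = (A i).toReal ∧ A i ≠ ⊤ :=
    fun i hi => by
      obtain ⟨hvm, hvi⟩ := hv i (Finset.mem_Icc.1 hi).1 (Finset.mem_Icc.1 hi).2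
      refine ⟨integral_abs_rpow_eq_toReal_lintegral hq0 hvm.aemeasurable, ne_of_lt ?_⟩
      refine lt_of_eq_of_lt (lintegral_congr fun x => ?_) hvi.lintegral_lt_top
      rw [Real.enorm_eq_ofReal_abs, ENNReal.ofReal_rpow_of_nonneg (abs_nonneg _) hq0]
  have hS : ∑ i ∈ Finset.Icc 1 (k + m), A i ≠ ⊤ := ENNReal.sum_ne_top.2 fun i hi => (hA i hi).2
  have hTS := (sum_add_sum_le_one_add_two_mul_pow_mul A D _ k m hWv).trans
    (mul_le_mul_left (ENNReal.one_add_two_mul_rpow_pow_le hκ hq k) _)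
  have hST := (sum_le_one_add_two_mul_pow_mul A D _ k m hvW).trans
    (mul_le_mul_left (ENNReal.one_add_two_mul_rpow_pow_le hκ hq k) _)
  have hT := ne_top_of_le_ne_top
    (ENNReal.mul_ne_top (ENNReal.rpow_ne_top_of_nonneg hq0 ENNReal.ofReal_ne_top) hS) hTS
  obtain ⟨hTm, hTk⟩ := ENNReal.add_ne_top.1 hT
  have hbounds := ENNReal.toReal_bounds_of_le_ofReal_rpow_mul (lam := (3 * κ) ^ k)
    (by positivity) hq0 hS hT hTS hST
  rwa [ENNReal.toReal_add hTm hTk, ENNReal.toReal_sum (ENNReal.sum_ne_top.1 hTm),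
    ENNReal.toReal_sum (ENNReal.sum_ne_top.1 hTk), ENNReal.toReal_sum fun i hi => (hA i hi).2,
    ← Finset.sum_congr rfl fun i hi => (hA i hi).1,
    ← Finset.sum_congr rfl fun i hi => integral_abs_rpow_eq_toReal_lintegral hq0 (hW i hi),
    ← Finset.sum_congr rfl fun i hi => (hA i (Finset.Icc_subset_Icc le_rfl (by omega) hi)).1]
    at hbounds

/-- `coupling k m M b v i x = M_i(v_{k+1}(b_{k+1,m+i}(x)), …, v_{m+i-1}(b_{m+i-1,m+i}(x)))`. -/
def coupling (k m : ℕ) (M : ℕ → ℕ → ℝ) (b : ℕ → ℕ → ℝ → ℝ) (v : ℕ → ℝ → ℝ) (i : ℕ) (x : ℝ) :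
    ℝ :=
  ∑ j ∈ Finset.Icc (k + 1) (m + i - 1), M i j * v j (b j (m + i) x)

noncomputable def lyapunovConst (k m : ℕ) (M : ℕ → ℕ → ℝ) (c₁ : ℝ) : ℝ :=
  (1 + ∑ i ∈ Finset.Icc 1 k, ∑ j ∈ Finset.Icc 1 (k + m), |M i j|) * (k + m + 1) * (1 + c₁⁻¹)

theorem one_le_lyapunovConst (k m : ℕ) (M : ℕ → ℕ → ℝ) {c₁ : ℝ} (hc₁ : 0 < c₁) :
    1 ≤ lyapunovConst k m M c₁ := by
  have h₁ : 1 ≤ 1 + ∑ i ∈ Finset.Icc 1 k, ∑ j ∈ Finset.Icc 1 (k + m), |M i j| :=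
    le_add_of_nonneg_right (by positivity)
  have h₂ : (1 : ℝ) ≤ k + m + 1 := le_add_of_nonneg_left (by positivity)
  have h₃ : 1 ≤ 1 + c₁⁻¹ := le_add_of_nonneg_right (inv_nonneg.2 hc₁.le)
  exact one_le_mul_of_one_le_of_one_le (one_le_mul_of_one_le_of_one_le h₁ h₂) h₃

theorem aemeasurable_coupling {k m i : ℕ} {M : ℕ → ℕ → ℝ} {b : ℕ → ℕ → ℝ → ℝ}
    {v : ℕ → ℝ → ℝ}
    (hb : ∀ j ∈ Finset.Icc (k + 1) (m + i - 1), ContinuousOn (b j (m + i)) (Icc 0 1))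
    (hv : ∀ j ∈ Finset.Icc (k + 1) (m + i - 1), Measurable (v j)) :
    AEMeasurable (coupling k m M b v i) (volume.restrict (Ioo 0 1)) :=
  Finset.aemeasurable_fun_sum _ fun j hj => ((hv j hj).comp_aemeasurable
    (((hb j hj).mono Ioo_subset_Icc_self).aemeasurable measurableSet_Ioo)).const_mul _

theorem lintegral_rpow_le_of_enorm_le_add_coupling {k m i : ℕ} {M : ℕ → ℕ → ℝ}
    {b : ℕ → ℕ → ℝ → ℝ} {c₁ q : ℝ} {v : ℕ → ℝ → ℝ} {y w : ℝ → ℝ}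
    (hq : 1 ≤ q) (hc₁ : 0 < c₁) (hi : i ∈ Finset.Icc 1 k)
    (hb : ∀ j ∈ Finset.Icc (k + 1) (m + i - 1), DifferentiableOn ℝ (b j (m + i)) (Icc 0 1) ∧
      MapsTo (b j (m + i)) (Icc 0 1) (Icc 0 1) ∧
      ∀ x ∈ Ioo (0 : ℝ) 1, c₁ ≤ |derivWithin (b j (m + i)) (Icc 0 1) x|)
    (hv : ∀ j ∈ Finset.Icc (k + 1) (m + i - 1), Measurable (v j))
    (hw : AEMeasurable w (volume.restrict (Ioo 0 1)))
    (hy : ∀ x, ‖y x‖ₑ ≤ ‖w x‖ₑ + ‖coupling k m M b v i x‖ₑ) :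
    ∫⁻ x in Ioo 0 1, ‖y x‖ₑ ^ q ≤ ENNReal.ofReal (lyapunovConst k m M c₁) ^ q *
      ((∫⁻ x in Ioo 0 1, ‖w x‖ₑ ^ q) +
        ∑ j ∈ Finset.Icc (k + 1) (m + i - 1), ∫⁻ x in Ioo 0 1, ‖v j x‖ₑ ^ q) := by
  set s := Finset.Icc (k + 1) (m + i - 1)
  set P := ∑ i ∈ Finset.Icc 1 k, ∑ j ∈ Finset.Icc 1 (k + m), |M i j|
  have hsub : s ⊆ Finset.Icc 1 (k + m) := Finset.Icc_subset_Icc (by omega) (by grind)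
  have hMP : ∀ j ∈ s, |M i j| ≤ P := fun j hj =>
    (Finset.single_le_sum (f := fun j => |M i j|) (fun _ _ => abs_nonneg _) (hsub hj)).trans
      (Finset.single_le_sum (f := fun i => ∑ j ∈ Finset.Icc 1 (k + m), |M i j|)
        (fun _ _ => by positivity) hi)
  have hcard : (#s : ℝ) ≤ k + m := by
    exact_mod_cast (Finset.card_le_card hsub).trans (by simp)
  have hcomp : ∀ j ∈ s, AEMeasurable (fun x => v j (b j (m + i) x)) (volume.restrict (Ioo 0 1)) :=
    fun j hj => (hv j hj).comp_aemeasurable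
      (((hb j hj).1.continuousOn.mono Ioo_subset_Icc_self).aemeasurable measurableSet_Ioo)
  have hΛ : 1 ≤ ENNReal.ofReal (1 + c₁⁻¹) := ENNReal.one_le_ofReal.2 (by simp [hc₁.le])
  refine (lintegral_rpow_le_of_enorm_le_add_sum_mul hq (by positivity) hMP hcard hw hcomp
    hy).trans ?_
  have hsplit : ENNReal.ofReal (lyapunovConst k m M c₁) ^ q =
      ENNReal.ofReal ((1 + P) * (k + m + 1)) ^ q * ENNReal.ofReal (1 + c₁⁻¹) ^ q := by
    rw [lyapunovConst, ENNReal.ofReal_mul (by positivity),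
      ENNReal.mul_rpow_of_nonneg _ _ (by linarith)]
  rw [hsplit, mul_assoc]
  refine mul_le_mul_right ?_ _
  calc _ ≤ ENNReal.ofReal (1 + c₁⁻¹) * ((∫⁻ x in Ioo 0 1, ‖w x‖ₑ ^ q)
        + ∑ j ∈ s, ∫⁻ x in Ioo 0 1, ‖v j x‖ₑ ^ q) := by
        rw [mul_add, Finset.mul_sum]
        gcongr with j hj
        · exact le_mul_of_one_le_left zero_le hΛ
        · refine (setLIntegral_Ioo_comp_le_of_le_abs_derivWithin (hb j hj).1 (hb j hj).2.1 hc₁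
            (hb j hj).2.2 fun y => ‖v j y‖ₑ ^ q).trans ?_
          gcongr
          linarith
    _ ≤ _ := by
        gcongr
        exact ENNReal.le_rpow_self_of_one_le hΛ hq

open MeasureTheory Set Finset in
theorem lyapunov_norm_equivalence_general (k m : ℕ)
    (b : ℕ → ℕ → ℝ → ℝ) (c₁ c₂ : ℝ) (hc₁ : 0 < c₁)
    (hb : ∀ i j, k + 1 ≤ i → i < j → j ≤ k + m →
      ContDiffOn ℝ 1 (b i j) (Icc 0 1) ∧ MapsTo (b i j) (Icc 0 1) (Icc 0 1) ∧
      ∀ x ∈ Ioo (0 : ℝ) 1,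
        c₁ ≤ |derivWithin (b i j) (Icc 0 1) x| ∧ |derivWithin (b i j) (Icc 0 1) x| ≤ c₂)
    (M : ℕ → ℕ → ℝ) :
    ∃ lam : ℝ, 1 ≤ lam ∧ ∀ q : ℝ, 1 ≤ q → ∀ v : ℕ → ℝ → ℝ,
      (∀ i, 1 ≤ i → i ≤ k + m →
        Measurable (v i) ∧ IntegrableOn (fun x => |v i x| ^ q) (Ioo 0 1)) →
      lam⁻¹ ^ q * (∑ i ∈ Finset.Icc 1 (k + m), ∫ x in Ioo (0 : ℝ) 1, |v i x| ^ q)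
        ≤ (∑ i ∈ Finset.Icc 1 m, ∫ x in Ioo (0 : ℝ) 1, |v i x| ^ q)
          + (∑ i ∈ Finset.Icc 1 k, ∫ x in Ioo (0 : ℝ) 1,
              |v (m + i) x
                - ∑ j ∈ Finset.Icc (k + 1) (m + i - 1), M i j * v j (b j (m + i) x)| ^ q)
      ∧ (∑ i ∈ Finset.Icc 1 m, ∫ x in Ioo (0 : ℝ) 1, |v i x| ^ q)
          + (∑ i ∈ Finset.Icc 1 k, ∫ x in Ioo (0 : ℝ) 1,
              |v (m + i) x
                - ∑ j ∈ Finset.Icc (k + 1) (m + i - 1), M i j * v j (b j (m + i) x)| ^ q)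
        ≤ lam ^ q * ∑ i ∈ Finset.Icc 1 (k + m), ∫ x in Ioo (0 : ℝ) 1, |v i x| ^ q := by
  have hbrow : ∀ i ∈ Finset.Icc 1 k, ∀ j ∈ Finset.Icc (k + 1) (m + i - 1),
      DifferentiableOn ℝ (b j (m + i)) (Icc 0 1) ∧ MapsTo (b j (m + i)) (Icc 0 1) (Icc 0 1) ∧
      ∀ x ∈ Ioo (0 : ℝ) 1, c₁ ≤ |derivWithin (b j (m + i)) (Icc 0 1) x| := by
    intro i hi j hj
    obtain ⟨hdiff, hmaps, hder⟩ := hb j (m + i) (by grind) (by grind) (by grind)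
    exact ⟨hdiff.differentiableOn one_ne_zero, hmaps, fun x hx => (hder x hx).1⟩
  have hκ := one_le_lyapunovConst k m M hc₁
  refine ⟨(3 * lyapunovConst k m M c₁) ^ k, one_le_pow₀ (by linarith), fun q hq v hv => ?_⟩
  have hvj : ∀ i ∈ Finset.Icc 1 k, ∀ j ∈ Finset.Icc (k + 1) (m + i - 1), Measurable (v j) :=
    fun i hi j hj => (hv j (by grind) (by grind)).1
  have hvmi : ∀ i ∈ Finset.Icc 1 k, AEMeasurable (v (m + i)) (volume.restrict (Ioo 0 1)) :=
    fun i hi => (hv (m + i) (by grind) (by grind)).1.aemeasurable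
  have hW : ∀ i ∈ Finset.Icc 1 k, AEMeasurable (fun x => v (m + i) x - coupling k m M b v i x)
      (volume.restrict (Ioo 0 1)) := fun i hi =>
    (hvmi i hi).sub (aemeasurable_coupling (fun j hj => (hbrow i hi j hj).1.continuousOn)
      (hvj i hi))
  exact sum_integral_abs_rpow_bounds_of_lintegral_bounds hκ hq hv hW
    (fun i hi => lintegral_rpow_le_of_enorm_le_add_coupling hq hc₁ hi (hbrow i hi) (hvj i hi)
      (hvmi i hi) fun x => enorm_sub_le)
    (fun i hi => lintegral_rpow_le_of_enorm_le_add_coupling hq hc₁ hi (hbrow i hi) (hvj i hi)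
      (hW i hi) fun x => by
        have h := enorm_add_le (v (m + i) x - coupling k m M b v i x) (coupling k m M b v i x)
        rwa [sub_add_cancel] at h)

open MeasureTheory Set Finset in
/-- Lemma A1: equivalence, with constants independent of `q`, between the Lyapunov norm
`|||v|||` and the `L^q` norm. Here `m ≥ k ≥ 1`, `n = k + m`, `ℓ = max{m,k} = m`,
the maps `b i j` (for `k+1 ≤ i < j ≤ k+m`) are `C¹` maps of `[0,1]` into itself with
`c₁ ≤ |b_{i,j}'| ≤ c₂` on `(0,1)`, and `M i` is a row vector acting linearly:
`M_i(ξ_{k+1},…,ξ_{m+i-1}) = ∑_{j=k+1}^{m+i-1} M i j * ξ_j`.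
The conclusion is `λ⁻¹ ‖v‖_{L^q} ≤ |||v||| ≤ λ ‖v‖_{L^q}`, stated equivalently after
raising to the power `q`. -/
theorem lyapunov_norm_equivalence (k m : ℕ) (hk : 1 ≤ k) (hkm : k ≤ m)
    (b : ℕ → ℕ → ℝ → ℝ) (c₁ c₂ : ℝ) (hc₁ : 0 < c₁) (hc₂ : 0 < c₂)
    (hb : ∀ i j, k + 1 ≤ i → i < j → j ≤ k + m →
      ContDiffOn ℝ 1 (b i j) (Icc 0 1) ∧ MapsTo (b i j) (Icc 0 1) (Icc 0 1) ∧
      ∀ x ∈ Ioo (0 : ℝ) 1,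
        c₁ ≤ |derivWithin (b i j) (Icc 0 1) x| ∧ |derivWithin (b i j) (Icc 0 1) x| ≤ c₂)
    (M : ℕ → ℕ → ℝ) :
    ∃ lam : ℝ, 1 ≤ lam ∧ ∀ q : ℝ, 1 ≤ q → ∀ v : ℕ → ℝ → ℝ,
      (∀ i, 1 ≤ i → i ≤ k + m →
        Measurable (v i) ∧ IntegrableOn (fun x => |v i x| ^ q) (Ioo 0 1)) →
      lam⁻¹ ^ q * (∑ i ∈ Finset.Icc 1 (k + m), ∫ x in Ioo (0 : ℝ) 1, |v i x| ^ q)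
        ≤ (∑ i ∈ Finset.Icc 1 m, ∫ x in Ioo (0 : ℝ) 1, |v i x| ^ q)
          + (∑ i ∈ Finset.Icc 1 k, ∫ x in Ioo (0 : ℝ) 1,
              |v (m + i) x
                - ∑ j ∈ Finset.Icc (k + 1) (m + i - 1), M i j * v j (b j (m + i) x)| ^ q)
      ∧ (∑ i ∈ Finset.Icc 1 m, ∫ x in Ioo (0 : ℝ) 1, |v i x| ^ q)
          + (∑ i ∈ Finset.Icc 1 k, ∫ x in Ioo (0 : ℝ) 1,
              |v (m + i) x
                - ∑ j ∈ Finset.Icc (k + 1) (m + i - 1), M i j * v j (b j (m + i) x)| ^ q)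
        ≤ lam ^ q * ∑ i ∈ Finset.Icc 1 (k + m), ∫ x in Ioo (0 : ℝ) 1, |v i x| ^ q :=
  lyapunov_norm_equivalence_general k m b c₁ c₂ hc₁ hb M
end

section
/- Let λ_i, λ_j : ℝ → ℝ be C¹ with positive lower and upper bounds, let x_i(t,s,ξ) solve d/dt x_i = -λ_i(x_i), x_i(s,s,ξ)=ξ, and x_j similarly with λ_j. For x ∈ [0,1] let τ(x) be the unique time with x_j(τ(x), 0, x) = 0, and define a(x) = x_i(0, τ(x), 0). Then a is C¹ on [0,1] and a'(x) = λ_i(a(x)) / λ_j(x) for every x ∈ [0,1]. -/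
/-- Along the flow of `-lam`, the primitive of `1/lam` decreases at unit rate. -/
lemma flow_time_map (lam : ℝ → ℝ) (hpos : ∀ y, 0 < lam y) (hc : Continuous lam)
    (x : ℝ → ℝ → ℝ → ℝ) (hx0 : ∀ s ξ, x s s ξ = ξ)
    (hxd : ∀ s ξ t, HasDerivAt (fun t' => x t' s ξ) (-lam (x t s ξ)) t)
    (s ξ t : ℝ) :
    (∫ u in (0:ℝ)..(x t s ξ), (lam u)⁻¹) = (∫ u in (0:ℝ)..ξ, (lam u)⁻¹) - (t - s) := by
  set F : ℝ → ℝ := fun y => ∫ u in (0:ℝ)..y, (lam u)⁻¹ with hF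
  have hcinv : Continuous fun u => (lam u)⁻¹ := hc.inv₀ fun u => (hpos u).ne'
  have hFd : ∀ y, HasDerivAt F (lam y)⁻¹ y := fun y =>
    (hcinv.integral_hasStrictDerivAt 0 y).hasDerivAt
  have hgd : ∀ u, HasDerivAt (fun t' => F (x t' s ξ) + t') 0 u := by
    intro u
    have h1 := (hFd (x u s ξ)).comp u (hxd s ξ u)
    have h2 := h1.add (hasDerivAt_id u)
    have : (lam (x u s ξ))⁻¹ * -lam (x u s ξ) + 1 = 0 := by
      rw [mul_neg, inv_mul_cancel₀ (hpos _).ne']; ring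
    rwa [this] at h2
  have hconst : ∀ u v : ℝ, F (x u s ξ) + u = F (x v s ξ) + v := by
    intro u v
    have := is_const_of_deriv_eq_zero (f := fun t' => F (x t' s ξ) + t')
      (fun w => (hgd w).differentiableAt) (fun w => (hgd w).deriv) u v
    exact this
  have := hconst t s
  rw [hx0 s ξ] at this
  have : F (x t s ξ) = F ξ + s - t := by linarith
  rw [hF] at this
  simp only at this
  linarith [this]

/-- The characteristic-geometry identity `a'(x) = λ_i(a(x)) / λ_j(x)`: with `x_i, x_j`
the backward flows of `-λ_i, -λ_j`, `τ(x)` the time at which the `j`-th backward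
characteristic from `x` reaches `0`, and `a(x) = x_i(0, τ(x), 0)`, the function `a`
is `C¹` on `[0,1]` with derivative `λ_i(a(x))/λ_j(x)`. -/
theorem a_ij_deriv (lami lamj : ℝ → ℝ) (ci Ci cj Cj : ℝ) (hci : 0 < ci) (hcj : 0 < cj)
    (hlami : ContDiff ℝ 1 lami) (hlamj : ContDiff ℝ 1 lamj)
    (hbi : ∀ y, ci ≤ lami y ∧ lami y ≤ Ci) (hbj : ∀ y, cj ≤ lamj y ∧ lamj y ≤ Cj)
    (xi xj : ℝ → ℝ → ℝ → ℝ)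
    (hxi0 : ∀ s ξ, xi s s ξ = ξ)
    (hxid : ∀ s ξ t, HasDerivAt (fun t' => xi t' s ξ) (-lami (xi t s ξ)) t)
    (hxj0 : ∀ s ξ, xj s s ξ = ξ)
    (hxjd : ∀ s ξ t, HasDerivAt (fun t' => xj t' s ξ) (-lamj (xj t s ξ)) t)
    (τ : ℝ → ℝ) (hτ : ∀ x ∈ Set.Icc (0 : ℝ) 1, 0 ≤ τ x ∧ xj (τ x) 0 x = 0)
    (a : ℝ → ℝ) (ha : ∀ x, a x = xi 0 (τ x) 0) :
    ContDiffOn ℝ 1 a (Set.Icc 0 1) ∧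
    ∀ x ∈ Set.Icc (0 : ℝ) 1,
      HasDerivWithinAt a (lami (a x) / lamj x) (Set.Icc 0 1) x := by
  have hipos : ∀ y, 0 < lami y := fun y => lt_of_lt_of_le hci (hbi y).1
  have hjpos : ∀ y, 0 < lamj y := fun y => lt_of_lt_of_le hcj (hbj y).1
  have hic := hlami.continuous
  have hjc := hlamj.continuous
  set Fi : ℝ → ℝ := fun y => ∫ u in (0:ℝ)..y, (lami u)⁻¹ with hFidef
  set Fj : ℝ → ℝ := fun y => ∫ u in (0:ℝ)..y, (lamj u)⁻¹ with hFjdef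
  have hiinv : Continuous fun u => (lami u)⁻¹ := hic.inv₀ fun u => (hipos u).ne'
  have hjinv : Continuous fun u => (lamj u)⁻¹ := hjc.inv₀ fun u => (hjpos u).ne'
  have hFid : ∀ y, HasDerivAt Fi (lami y)⁻¹ y := fun y =>
    (hiinv.integral_hasStrictDerivAt 0 y).hasDerivAt
  have hFjd : ∀ y, HasDerivAt Fj (lamj y)⁻¹ y := fun y =>
    (hjinv.integral_hasStrictDerivAt 0 y).hasDerivAt
  have hFi0 : Fi 0 = 0 := intervalIntegral.integral_same
  have hFj0 : Fj 0 = 0 := intervalIntegral.integral_same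
  have hFimono : StrictMono Fi :=
    strictMono_of_deriv_pos fun y => by rw [(hFid y).deriv]; exact inv_pos.2 (hipos y)
  have hflowi := flow_time_map lami hipos hic xi hxi0 hxid
  have hflowj := flow_time_map lamj hjpos hjc xj hxj0 hxjd
  -- τ = Fj on Icc
  have hτeq : ∀ x ∈ Set.Icc (0:ℝ) 1, τ x = Fj x := by
    intro x hx
    have h := hflowj 0 x (τ x)
    rw [(hτ x hx).2] at h
    have : Fj 0 = Fj x - (τ x - 0) := h
    rw [hFj0] at this; linarith
  -- G is inverse of Fi
  set G : ℝ → ℝ := fun s => xi 0 s 0 with hGdef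
  have hFiG : ∀ s, Fi (G s) = s := by
    intro s
    have h := hflowi s (0:ℝ) 0
    show (∫ u in (0:ℝ)..(xi 0 s 0), (lami u)⁻¹) = s
    rw [h, intervalIntegral.integral_same]; ring
  have hGmono : StrictMono G := by
    intro s t hst
    have : Fi (G s) < Fi (G t) := by rw [hFiG, hFiG]; exact hst
    exact hFimono.lt_iff_lt.mp this
  have hGsurj : Function.Surjective G := by
    intro y
    refine ⟨Fi y, hFimono.injective ?_⟩
    rw [hFiG]
  have hGcont : Continuous G := hGmono.monotone.continuous_of_surjective hGsurj
  have hGd : ∀ s, HasDerivAt G (lami (G s)) s := by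
    intro s
    have h := HasDerivAt.of_local_left_inverse (f := Fi) (g := G)
      hGcont.continuousAt (hFid (G s)) (inv_ne_zero (hipos (G s)).ne')
      (Filter.Eventually.of_forall hFiG)
    simpa using h
  -- a = G ∘ Fj on Icc
  have haeq : ∀ x ∈ Set.Icc (0:ℝ) 1, a x = G (Fj x) := by
    intro x hx
    rw [ha x, hτeq x hx]
  have hGC1 : ContDiff ℝ 1 G := by
    rw [contDiff_one_iff_deriv]
    refine ⟨fun s => (hGd s).differentiableAt, ?_⟩
    have : deriv G = fun s => lami (G s) := funext fun s => (hGd s).deriv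
    rw [this]
    exact hic.comp hGcont
  have hFjC1 : ContDiff ℝ 1 Fj := by
    rw [contDiff_one_iff_deriv]
    refine ⟨fun y => (hFjd y).differentiableAt, ?_⟩
    have : deriv Fj = fun y => (lamj y)⁻¹ := funext fun y => (hFjd y).deriv
    rw [this]
    exact hjinv
  constructor
  · exact ((hGC1.comp hFjC1).contDiffOn).congr haeq
  · intro x hx
    have hcomp : HasDerivAt (fun y => G (Fj y)) (lami (G (Fj x)) * (lamj x)⁻¹) x :=
      (hGd (Fj x)).comp x (hFjd x)
    have hval : lami (G (Fj x)) * (lamj x)⁻¹ = lami (a x) / lamj x := by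
      rw [← haeq x hx, div_eq_mul_inv]
    rw [← hval]
    exact (hcomp.hasDerivWithinAt).congr haeq (haeq x hx)
end

section
/- With the Lyapunov weights p_i of Theorem 1.1 — p_i(x) = λ_i(x)^{-1} e^{-qΛ∫₀^x λ_i^{-1} + qΛ∫₀¹ λ_i^{-1}} for 1 ≤ i ≤ k, p_i(x) = Γ^q λ_i(x)^{-1} e^{qΛ∫₀^x λ_i^{-1}} for k+1 ≤ i ≤ ℓ, and p_{m+i}(x) = Γ^q λ_{m+i}(x)^{-1} e^{qΛ∫₀^x λ_{m+i}^{-1} + qΛ∫₀¹ λ_i^{-1}} for ℓ+1 ≤ m+i ≤ m+k — one has A/a ≤ C^q e^{qΛ T_opt}, where A and a are the sup and inf over all indices and x of the weights, T_opt is defined by (1.10) of the paper, and C depends only on Γ and the bounds of the λ_i (not on q or Λ). -/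
/-!
On `[0,1]` the speeds, hence also their inverses, lie between `C⁻¹` and `C` for one constant
`C ≥ 1`. Every weight is a factor in `[1, Γ^q]`, times `λ_j⁻¹`, times `exp (qΛ e)`, where the
exponent `e` is `τ_j - ∫₀^x λ_j⁻¹`, `∫₀^x λ_j⁻¹`, or `∫₀^x λ_{m+i}⁻¹ + τ_i`. So `e` lies between `0`
and `τ_j` or `τ_{m+i} + τ_i`, and because travel times increase along the negative family and
decrease along the positive one, each of these is at most `T_opt`. Therefore
`A ≤ Γ^q C e^{qΛ T_opt}` and `a ≥ C⁻¹`, and `C' = Γ C²` works.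
-/

open Set

theorem IsCompact.exists_mem_Icc_inv_self_of_continuousOn {X ι : Type*} [TopologicalSpace X]
    {K : Set X} (hK : IsCompact K) {s : Set ι} (hs : s.Finite) {f : ι → X → ℝ}
    (hf : ∀ i ∈ s, ContinuousOn (f i) K) (hf0 : ∀ i ∈ s, ∀ x ∈ K, 0 < f i x) :
    ∃ C, 1 ≤ C ∧ ∀ i ∈ s, ∀ x ∈ K, f i x ∈ Icc C⁻¹ C := by
  obtain ⟨C, hC⟩ := hK.exists_bound_of_continuousOn
    (f := fun x => ∑ i ∈ hs.toFinset, (f i x + (f i x)⁻¹))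
    (continuousOn_finsetSum _ fun i hi => (hf i (hs.mem_toFinset.1 hi)).add
      ((hf i (hs.mem_toFinset.1 hi)).inv₀ fun x hx => (hf0 i (hs.mem_toFinset.1 hi) x hx).ne'))
  refine ⟨max C 1, le_max_right _ _, fun i hi x hx => ?_⟩
  have hpos := hf0 i hi x hx
  have hsum : f i x + (f i x)⁻¹ ≤ max C 1 :=
    calc f i x + (f i x)⁻¹ ≤ ∑ j ∈ hs.toFinset, (f j x + (f j x)⁻¹) :=
          Finset.single_le_sum (f := fun j => f j x + (f j x)⁻¹) (fun j hj =>
            have hj0 := hf0 j (hs.mem_toFinset.1 hj) x hx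
            (add_pos hj0 (inv_pos.2 hj0)).le) (hs.mem_toFinset.2 hi)
      _ ≤ C := (Real.le_norm_self _).trans (hC x hx)
      _ ≤ max C 1 := le_max_left _ _
  have hinv := inv_pos.2 hpos
  exact ⟨inv_le_of_inv_le₀ hpos (by linarith), by linarith⟩

theorem intervalIntegral.integral_inv_mem_Icc {f : ℝ → ℝ} {a b x : ℝ}
    (hf : ContinuousOn f (Icc a b)) (hf0 : ∀ s ∈ Icc a b, 0 < f s) (hx : x ∈ Icc a b) :
    ∫ s in a..x, (f s)⁻¹ ∈ Icc 0 (∫ s in a..b, (f s)⁻¹) :=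
  ⟨integral_nonneg hx.1 fun s hs => (inv_pos.2 (hf0 s ⟨hs.1, hs.2.trans hx.2⟩)).le,
    integral_mono_interval le_rfl hx.1 hx.2
      (MeasureTheory.ae_restrict_of_forall_mem measurableSet_Ioc fun s hs =>
        (inv_pos.2 (hf0 s (Ioc_subset_Icc_self hs))).le)
      ((hf.inv₀ fun s hs => (hf0 s hs).ne').intervalIntegrable_of_Icc (hx.1.trans hx.2))⟩

section travelTime

variable {ι : Type*} [PartialOrder ι] {lam : ι → ℝ → ℝ} {s : Set ι} {a b : ℝ}

theorem monotoneOn_integral_inv_of_lt (hab : a ≤ b)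
    (hcont : ∀ i ∈ s, ContinuousOn (lam i) (Icc a b))
    (hpos : ∀ i ∈ s, ∀ x ∈ Icc a b, 0 < lam i x)
    (hlt : ∀ i ∈ s, ∀ j ∈ s, i < j → ∀ x ∈ Icc a b, lam j x < lam i x) :
    MonotoneOn (fun i => ∫ x in a..b, (lam i x)⁻¹) s := by
  intro i hi j hj hij
  rcases hij.eq_or_lt with rfl | hij
  · rfl
  have hint : ∀ i ∈ s, IntervalIntegrable (fun x => (lam i x)⁻¹) MeasureTheory.volume a b :=
    fun i hi => ((hcont i hi).inv₀ fun x hx => (hpos i hi x hx).ne').intervalIntegrable_of_Icc hab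
  exact intervalIntegral.integral_mono_on hab (hint i hi) (hint j hj) fun x hx =>
    inv_anti₀ (hpos j hj x hx) (hlt i hi j hj hij x hx).le

theorem antitoneOn_integral_inv_of_lt (hab : a ≤ b)
    (hcont : ∀ i ∈ s, ContinuousOn (lam i) (Icc a b))
    (hpos : ∀ i ∈ s, ∀ x ∈ Icc a b, 0 < lam i x)
    (hlt : ∀ i ∈ s, ∀ j ∈ s, i < j → ∀ x ∈ Icc a b, lam i x < lam j x) :
    AntitoneOn (fun i => ∫ x in a..b, (lam i x)⁻¹) s :=
  fun _ hi _ hj hij => monotoneOn_integral_inv_of_lt (ι := ιᵒᵈ) hab hcont hpos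
    (fun i hi j hj hij => hlt j hj i hi hij) hj hi hij

end travelTime

theorem mul_mul_exp_mem_Icc {G C c γ κ e T : ℝ} (hC : 0 < C) (hγ : γ ∈ Icc 1 G)
    (hc : c ∈ Icc C⁻¹ C) (hκ : 0 ≤ κ) (he : e ∈ Icc 0 T) :
    γ * c * Real.exp (κ * e) ∈ Icc C⁻¹ (G * C * Real.exp (κ * T)) := by
  have hc0 : 0 ≤ c := (inv_pos.2 hC).le.trans hc.1
  have hγ0 : 0 ≤ γ := zero_le_one.trans hγ.1
  constructor
  · calc C⁻¹ ≤ 1 * c * 1 := by simpa using hc.1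
      _ ≤ γ * c * Real.exp (κ * e) := by
        gcongr
        · exact hγ.1
        · exact Real.one_le_exp (mul_nonneg hκ he.1)
  · have hG0 : 0 ≤ G := hγ0.trans hγ.2
    exact mul_le_mul (mul_le_mul hγ.2 hc.2 hc0 hG0)
      (Real.exp_le_exp.2 (mul_le_mul_of_nonneg_left he.2 hκ)) (Real.exp_pos _).le
      (mul_nonneg hG0 hC.le)

theorem div_le_rpow_mul_of_le_of_inv_le {A a G C E q : ℝ} (hA : A ≤ G ^ q * C * E)
    (ha : C⁻¹ ≤ a) (hG : 1 ≤ G) (hC : 1 ≤ C) (hq : 1 ≤ q) (hE : 0 ≤ E) :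
    A / a ≤ (G * C ^ 2) ^ q * E := by
  have hG0 : 0 ≤ G := zero_le_one.trans hG
  have hC0 : 0 < C := zero_lt_one.trans_le hC
  calc A / a ≤ G ^ q * C * E / C⁻¹ := div_le_div₀ (by positivity) hA (by positivity) ha
    _ = G ^ q * C ^ 2 * E := by field_simp
    _ ≤ G ^ q * (C ^ 2) ^ q * E := by
        gcongr
        exact Real.self_le_rpow_of_one_le (one_le_pow₀ hC) hq
    _ = (G * C ^ 2) ^ q * E := by rw [Real.mul_rpow hG0 (by positivity)]

def optimalTime (k m : ℕ) (hk : 1 ≤ k) (hm : 1 ≤ m) (τ : ℕ → ℝ) : ℝ :=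
  if k ≤ m then
    max ((Finset.Icc 1 k).sup' (Finset.nonempty_Icc.mpr hk) (fun i => τ i + τ (m + i)))
      (τ (k + 1))
  else
    (Finset.Icc 1 m).sup' (Finset.nonempty_Icc.mpr hm) (fun i => τ (k - m + i) + τ (k + i))

section optimalTime

variable {k m : ℕ} (hk : 1 ≤ k) (hm : 1 ≤ m) {τ : ℕ → ℝ}

theorem add_le_optimalTime {i : ℕ} (hi : max m k + 1 ≤ m + i) (hik : i ≤ k) :
    τ i + τ (m + i) ≤ optimalTime k m hk hm τ := by
  unfold optimalTime
  split_ifs with hkm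
  · exact (Finset.le_sup' (fun i => τ i + τ (m + i)) (Finset.mem_Icc.2 ⟨by omega, hik⟩)).trans
      (le_max_left _ _)
  · have h := Finset.le_sup' (fun i => τ (k - m + i) + τ (k + i))
      (Finset.mem_Icc.2 (⟨by omega, by omega⟩ : 1 ≤ i - (k - m) ∧ i - (k - m) ≤ m))
    rwa [show k - m + (i - (k - m)) = i by omega, show k + (i - (k - m)) = m + i by omega] at h

theorem sub_mem_Icc_optimalTime (hτ0 : ∀ i ∈ Icc (k + 1) (k + m), 0 ≤ τ i)
    (hτ : MonotoneOn τ (Icc 1 k)) {j : ℕ} (hj : 1 ≤ j) (hjk : j ≤ k) {I : ℝ}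
    (hI : I ∈ Icc 0 (τ j)) : τ j - I ∈ Icc 0 (optimalTime k m hk hm τ) := by
  refine ⟨sub_nonneg.2 hI.2, ?_⟩
  by_cases hkm : k ≤ m
  · have h := add_le_optimalTime hk hm (τ := τ) (i := j) (by omega) hjk
    linarith [hI.1, hτ0 (m + j) ⟨by omega, by omega⟩]
  · have h := add_le_optimalTime hk hm (τ := τ) (i := k) (by omega) le_rfl
    linarith [hI.1, hτ0 (m + k) ⟨by omega, by omega⟩, hτ ⟨hj, hjk⟩ ⟨hk, le_rfl⟩ hjk]

theorem mem_Icc_optimalTime_of_le_max (hτ : AntitoneOn τ (Icc (k + 1) (k + m))) {j : ℕ}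
    (hj : k + 1 ≤ j) (hjm : j ≤ max m k) {I : ℝ} (hI : I ∈ Icc 0 (τ j)) :
    I ∈ Icc 0 (optimalTime k m hk hm τ) := by
  have hkm : k ≤ m := by omega
  rw [optimalTime, if_pos hkm]
  exact ⟨hI.1, hI.2.trans ((hτ ⟨le_rfl, by omega⟩ ⟨hj, by omega⟩ hj).trans (le_max_right _ _))⟩

theorem add_mem_Icc_optimalTime {i : ℕ} (hi : max m k + 1 ≤ m + i) (hik : i ≤ k) {I : ℝ}
    (hI : I ∈ Icc 0 (τ (m + i))) (hτi : 0 ≤ τ i) : I + τ i ∈ Icc 0 (optimalTime k m hk hm τ) :=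
  ⟨add_nonneg hI.1 hτi, by linarith [hI.2, add_le_optimalTime hk hm (τ := τ) hi hik]⟩

end optimalTime

open Set in
/-- Estimate (2.25): with the Lyapunov weights `p_i` of Theorem 1.1, the ratio `A/a` of the
largest and smallest values of the weights satisfies `A/a ≤ C^q e^{qΛ T_opt}`, where `C`
depends only on `Γ` and the speeds `λ_i`, not on `q` or `Λ`. Here `ℓ = max{m,k}`,
`τ_i = ∫₀¹ λ_i⁻¹`, and `T_opt` is given by (1.10). `A` and `a` are characterized as the
least upper bound and the greatest lower bound of the weights over all indices and `x`. -/
theorem weight_ratio_estimate (k m : ℕ) (hk : 1 ≤ k) (hm : 1 ≤ m)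
    (lam : ℕ → ℝ → ℝ)
    (hcont : ∀ i, 1 ≤ i → i ≤ k + m → ContinuousOn (lam i) (Icc 0 1))
    (hpos : ∀ i, 1 ≤ i → i ≤ k + m → ∀ x ∈ Icc (0 : ℝ) 1, 0 < lam i x)
    (hordneg : ∀ i₁ i₂, 1 ≤ i₁ → i₁ < i₂ → i₂ ≤ k →
      ∀ x ∈ Icc (0 : ℝ) 1, lam i₂ x < lam i₁ x)
    (hordpos : ∀ i₁ i₂, k + 1 ≤ i₁ → i₁ < i₂ → i₂ ≤ k + m →
      ∀ x ∈ Icc (0 : ℝ) 1, lam i₁ x < lam i₂ x)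
    (Γ : ℝ) (hΓ : 1 ≤ Γ)
    (τ : ℕ → ℝ) (hτ : ∀ i, τ i = ∫ s in (0 : ℝ)..1, (lam i s)⁻¹)
    (Topt : ℝ)
    (hTopt : Topt =
      if k ≤ m then
        max ((Finset.Icc 1 k).sup' (Finset.nonempty_Icc.mpr hk)
          (fun i => τ i + τ (m + i))) (τ (k + 1))
      else
        (Finset.Icc 1 m).sup' (Finset.nonempty_Icc.mpr hm)
          (fun i => τ (k - m + i) + τ (k + i))) :
    ∃ C : ℝ, 0 < C ∧ ∀ q Λ : ℝ, 1 ≤ q → 1 ≤ Λ →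
      ∀ p : ℕ → ℝ → ℝ,
      (∀ i, 1 ≤ i → i ≤ k → ∀ x, p i x = (lam i x)⁻¹ *
        Real.exp (-(q * Λ) * (∫ s in (0 : ℝ)..x, (lam i s)⁻¹)
          + q * Λ * ∫ s in (0 : ℝ)..1, (lam i s)⁻¹)) →
      (∀ i, k + 1 ≤ i → i ≤ max m k → ∀ x, p i x = Γ ^ q * (lam i x)⁻¹ *
        Real.exp (q * Λ * ∫ s in (0 : ℝ)..x, (lam i s)⁻¹)) →
      (∀ i, max m k + 1 ≤ m + i → m + i ≤ m + k → ∀ x, p (m + i) x =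
        Γ ^ q * (lam (m + i) x)⁻¹ *
        Real.exp (q * Λ * (∫ s in (0 : ℝ)..x, (lam (m + i) s)⁻¹)
          + q * Λ * ∫ s in (0 : ℝ)..1, (lam i s)⁻¹)) →
      ∀ A a : ℝ,
      (∀ i, 1 ≤ i → i ≤ k + m → ∀ x ∈ Icc (0 : ℝ) 1, p i x ≤ A) →
      (∀ B : ℝ, (∀ i, 1 ≤ i → i ≤ k + m → ∀ x ∈ Icc (0 : ℝ) 1, p i x ≤ B) → A ≤ B) →
      (∀ i, 1 ≤ i → i ≤ k + m → ∀ x ∈ Icc (0 : ℝ) 1, a ≤ p i x) →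
      (∀ c : ℝ, (∀ i, 1 ≤ i → i ≤ k + m → ∀ x ∈ Icc (0 : ℝ) 1, c ≤ p i x) → c ≤ a) →
      A / a ≤ C ^ q * Real.exp (q * Λ * Topt) := by
  change Topt = optimalTime k m hk hm τ at hTopt
  subst hTopt
  have hI : ∀ i, 1 ≤ i → i ≤ k + m → ∀ x ∈ Icc (0 : ℝ) 1,
      ∫ s in (0 : ℝ)..x, (lam i s)⁻¹ ∈ Icc 0 (τ i) := fun i h1 h2 _ hx =>
    hτ i ▸ intervalIntegral.integral_inv_mem_Icc (hcont i h1 h2) (hpos i h1 h2) hx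
  have hτ0 : ∀ i, 1 ≤ i → i ≤ k + m → 0 ≤ τ i := fun i h1 h2 =>
    nonempty_Icc.1 ⟨_, hI i h1 h2 1 ⟨zero_le_one, le_rfl⟩⟩
  have hτneg : MonotoneOn τ (Icc 1 k) := funext hτ ▸ monotoneOn_integral_inv_of_lt zero_le_one
    (fun i hi => hcont i hi.1 (hi.2.trans (k.le_add_right m)))
    (fun i hi => hpos i hi.1 (hi.2.trans (k.le_add_right m)))
    fun i hi j hj hij => hordneg i j hi.1 hij hj.2
  have hτpos : AntitoneOn τ (Icc (k + 1) (k + m)) := funext hτ ▸ antitoneOn_integral_inv_of_lt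
    zero_le_one (fun i hi => hcont i (le_add_self.trans hi.1) hi.2)
    (fun i hi => hpos i (le_add_self.trans hi.1) hi.2)
    fun i hi j hj hij => hordpos i j hi.1 hij hj.2
  obtain ⟨C, hC1, hC⟩ := isCompact_Icc.exists_mem_Icc_inv_self_of_continuousOn
    (finite_Icc 1 (k + m)) (f := fun i x => (lam i x)⁻¹)
    (fun i hi => (hcont i hi.1 hi.2).inv₀ fun x hx => (hpos i hi.1 hi.2 x hx).ne')
    (fun i hi x hx => inv_pos.2 (hpos i hi.1 hi.2 x hx))
  refine ⟨Γ * C ^ 2, by positivity, fun q Λ hq hΛ p hp₁ hp₂ hp₃ A a _ hA _ ha => ?_⟩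
  have hqΛ : 0 ≤ q * Λ := by positivity
  have hΓq : 1 ≤ Γ ^ q := Real.one_le_rpow hΓ (by positivity)
  have hC0 : 0 < C := zero_lt_one.trans_le hC1
  have hp : ∀ j, 1 ≤ j → j ≤ k + m → ∀ x ∈ Icc (0 : ℝ) 1,
      p j x ∈ Icc C⁻¹ (Γ ^ q * C * Real.exp (q * Λ * optimalTime k m hk hm τ)) := by
    intro j hj hjkm x hx
    have hlam := hC j ⟨hj, hjkm⟩ x hx
    have hIj := hI j hj hjkm x hx
    rcases le_or_gt j k with hjk | hkj
    · rw [hp₁ j hj hjk x, ← hτ, ← one_mul (lam j x)⁻¹, neg_mul, neg_add_eq_sub, ← mul_sub]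
      exact mul_mul_exp_mem_Icc hC0 ⟨le_rfl, hΓq⟩ hlam hqΛ <| sub_mem_Icc_optimalTime hk hm
        (fun i hi => hτ0 i (le_add_self.trans hi.1) hi.2) hτneg hj hjk hIj
    rcases le_or_gt j (max m k) with hjℓ | hℓj
    · rw [hp₂ j hkj hjℓ x]
      exact mul_mul_exp_mem_Icc hC0 ⟨hΓq, le_rfl⟩ hlam hqΛ <|
        mem_Icc_optimalTime_of_le_max hk hm hτpos hkj hjℓ hIj
    · obtain ⟨i, rfl⟩ : ∃ i, j = m + i := ⟨j - m, by omega⟩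
      rw [hp₃ i hℓj (by omega) x, ← hτ, ← mul_add]
      exact mul_mul_exp_mem_Icc hC0 ⟨hΓq, le_rfl⟩ hlam hqΛ <|
        add_mem_Icc_optimalTime hk hm hℓj (by omega) hIj (hτ0 i (by omega) (by omega))
  exact div_le_rpow_mul_of_le_of_inv_le (hA _ fun j h1 h2 x hx => (hp j h1 h2 x hx).2)
    (ha _ fun j h1 h2 x hx => (hp j h1 h2 x hx).1) hΓ hC1 hq (Real.exp_pos _).le
end
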